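/- Let h₀ : U → ℝ be proper convex lower semicontinuous on a Hilbert space U, p ≥ 2, q the conjugate exponent, λ > 0, T > t ≥ 0, and define K(u) = ∫_t^T e^{-λτ} h₀(u(τ)) dτ on L^p_λ(t,T;U). Then for u ∈ dom(K), the subdifferential of K at u (with respect to the duality pairing ⟨φ,w⟩ = ∫_t^T e^{-λτ}(φ(τ)|w(τ))_U dτ) equals {φ ∈ L^q_λ(t,T;U) : φ(τ) ∈ ∂h₀(u(τ)) for a.e. τ ∈ [t,T)}. -/

import Mathlib

open MeasureTheory
open scoped InnerProductSpace

/-!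
Testing the subgradient inequality of `K` against `w = z` on a measurable set `A` and `w = u`
off `A` localizes it: for each fixed `z`, `h₀ (u τ) + ⟪φ τ, z - u τ⟫ ≤ h₀ z` for a.e. `τ`.
The exceptional null set depends on `z` and `U` need not be separable, but for fixed `z` the
inequality says that `(φ τ, h₀ (u τ) - ⟪φ τ, u τ⟫)` lies in a closed subset of `U × ℝ`, and these
pairs lie a.e. in a separable, hence Lindelöf, set; so countably many `z` suffice.
Hölder's inequality makes the weighted pairing finite, since `e^{-λτ/q} e^{-λτ/p} = e^{-λτ}`.
-/

section Localization

variable {α : Type*} [MeasurableSpace α] {μ : Measure α}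

theorem ae_forall_mem_of_isClosed {X ι : Type*} [TopologicalSpace X]
    [TopologicalSpace.PseudoMetrizableSpace X]
    {f : α → X} {S : Set X} (hS : TopologicalSpace.IsSeparable S) (hfS : ∀ᵐ x ∂μ, f x ∈ S)
    {C : ι → Set X} (hC : ∀ i, IsClosed (C i)) (h : ∀ i, ∀ᵐ x ∂μ, f x ∈ C i) :
    ∀ᵐ x ∂μ, ∀ i, f x ∈ C i := by
  have := hS.secondCountableTopology
  obtain ⟨I, hI, hIU⟩ := TopologicalSpace.isOpen_iUnion_countable
    (fun i => ((↑) : S → X) ⁻¹' (C i)ᶜ) fun i => (hC i).isOpen_compl.preimage continuous_subtype_val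
  filter_upwards [hfS, (ae_ball_iff hI).2 fun i _ => h i] with x hxS hxI i
  by_contra hxi
  have hx : (⟨f x, hxS⟩ : S) ∈ ⋃ i ∈ I, ((↑) : S → X) ⁻¹' (C i)ᶜ :=
    hIU ▸ Set.mem_iUnion.2 ⟨i, hxi⟩
  obtain ⟨j, hj, hxj⟩ := Set.mem_iUnion₂.1 hx
  exact hxj (hxI j hj)

open Classical in
theorem ae_le_of_forall_integral_le_piecewise {f g : α → ℝ} (hf : Integrable f μ)
    (hg : Integrable g μ) (h : ∀ A, MeasurableSet A → ∫ x, f x ∂μ ≤ ∫ x, A.piecewise g f x ∂μ) :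
    f ≤ᵐ[μ] g := by
  refine ae_le_of_forall_setIntegral_le hf hg fun A hA _ => ?_
  have hsplit := integral_add_compl hA hf
  have hmin := h A hA
  rw [integral_piecewise hA hg.integrableOn hf.integrableOn] at hmin
  linarith

end Localization

section Subgradient

variable {α U : Type*} [MeasurableSpace α] {μ : Measure α}
  [NormedAddCommGroup U] [InnerProductSpace ℝ U] {h₀ : U → ℝ} {u φ : α → U}

theorem ae_forall_subgradient_of_forall_ae (hφ : AEStronglyMeasurable φ μ)
    (h : ∀ z, ∀ᵐ x ∂μ, h₀ (u x) + ⟪φ x, z - u x⟫_ℝ ≤ h₀ z) :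
    ∀ᵐ x ∂μ, ∀ z, h₀ (u x) + ⟪φ x, z - u x⟫_ℝ ≤ h₀ z := by
  obtain ⟨S, hS, hφS⟩ := hφ.isSeparable_ae_range
  have hmem : ∀ x z, (φ x, h₀ (u x) - ⟪φ x, u x⟫_ℝ) ∈ {y : U × ℝ | y.2 + ⟪y.1, z⟫_ℝ ≤ h₀ z} ↔
      h₀ (u x) + ⟪φ x, z - u x⟫_ℝ ≤ h₀ z := by
    intro x z
    change h₀ (u x) - ⟪φ x, u x⟫_ℝ + ⟪φ x, z⟫_ℝ ≤ h₀ z ↔ _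
    rw [inner_sub_right]
    constructor <;> intro hxz <;> linarith
  have key := ae_forall_mem_of_isClosed (f := fun x => (φ x, h₀ (u x) - ⟪φ x, u x⟫_ℝ))
    (C := fun z => {y : U × ℝ | y.2 + ⟪y.1, z⟫_ℝ ≤ h₀ z})
    (hS.prod (.of_separableSpace Set.univ)) (by filter_upwards [hφS] with x hx using ⟨hx, trivial⟩)
    (fun z => isClosed_le (by fun_prop) continuous_const) fun z => by simpa only [hmem] using h z
  simpa only [hmem] using key

variable {e : α → ℝ}

theorem integral_add_integral_inner_le_of_ae_subgradient {w : α → U} (he : ∀ x, 0 ≤ e x)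
    (hKu : Integrable (fun x => e x * h₀ (u x)) μ) (hKw : Integrable (fun x => e x * h₀ (w x)) μ)
    (hpair : Integrable (fun x => e x * ⟪φ x, w x - u x⟫_ℝ) μ)
    (hsub : ∀ᵐ x ∂μ, h₀ (u x) + ⟪φ x, w x - u x⟫_ℝ ≤ h₀ (w x)) :
    (∫ x, e x * h₀ (u x) ∂μ) + ∫ x, e x * ⟪φ x, w x - u x⟫_ℝ ∂μ ≤ ∫ x, e x * h₀ (w x) ∂μ := by
  rw [← integral_add hKu hpair]
  refine integral_mono_ae (hKu.add hpair) hKw ?_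
  filter_upwards [hsub] with x hx
  rw [← mul_add]
  exact mul_le_mul_of_nonneg_left hx (he x)

open Classical in
theorem ae_subgradient_of_forall_integral_le {Adm : Set (α → U)} (he : ∀ x, 0 < e x)
    (he_int : Integrable e μ) (hKu : Integrable (fun x => e x * h₀ (u x)) μ)
    (hpatch : ∀ z A, MeasurableSet A → A.piecewise (fun _ => z) u ∈ Adm)
    (hpair : ∀ w ∈ Adm, Integrable (fun x => e x * ⟪φ x, w x - u x⟫_ℝ) μ)
    (H : ∀ w ∈ Adm, Integrable (fun x => e x * h₀ (w x)) μ →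
      (∫ x, e x * h₀ (u x) ∂μ) + ∫ x, e x * ⟪φ x, w x - u x⟫_ℝ ∂μ ≤ ∫ x, e x * h₀ (w x) ∂μ)
    (z : U) : ∀ᵐ x ∂μ, h₀ (u x) + ⟪φ x, z - u x⟫_ℝ ≤ h₀ z := by
  set L : (α → U) → α → ℝ := fun v x => e x * h₀ (v x) - e x * ⟪φ x, v x - u x⟫_ℝ
  have hLu : L u = fun x => e x * h₀ (u x) := by simp [L]
  have hz : (fun _ => z) ∈ Adm := by simpa using hpatch z Set.univ MeasurableSet.univ
  have hLz : Integrable (L fun _ => z) μ := (he_int.mul_const (h₀ z)).sub (hpair _ hz)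
  have hle : L u ≤ᵐ[μ] L fun _ => z := by
    refine ae_le_of_forall_integral_le_piecewise (hLu ▸ hKu) hLz fun A hA => ?_
    set w := A.piecewise (fun _ => z) u
    have hLw : L w = A.piecewise (L fun _ => z) (L u) := by
      ext x; by_cases hx : x ∈ A <;> simp [L, w, hx]
    have hKw : Integrable (fun x => e x * h₀ (w x)) μ := by
      have hKw : (fun x => e x * h₀ (w x)) = A.piecewise (fun x => e x * h₀ z) (L u) := by
        ext x; by_cases hx : x ∈ A <;> simp [L, w, hx]
      exact hKw ▸ Integrable.piecewise hA (he_int.mul_const _).integrableOn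
        (hLu ▸ hKu).integrableOn
    rw [← hLw, hLu, integral_sub hKw (hpair w (hpatch z A hA))]
    linarith [H w (hpatch z A hA) hKw]
  filter_upwards [hle] with x hx
  simp only [L, sub_self, inner_zero_right, sub_zero, ← mul_sub] at hx
  linarith [le_of_mul_le_mul_left hx (he x)]

open Classical in
theorem forall_integral_le_iff_ae_subgradient {Adm : Set (α → U)} (he : ∀ x, 0 < e x)
    (he_int : Integrable e μ) (hφ : AEStronglyMeasurable φ μ)
    (hKu : Integrable (fun x => e x * h₀ (u x)) μ)
    (hpatch : ∀ z A, MeasurableSet A → A.piecewise (fun _ => z) u ∈ Adm)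
    (hpair : ∀ w ∈ Adm, Integrable (fun x => e x * ⟪φ x, w x - u x⟫_ℝ) μ) :
    (∀ w ∈ Adm, Integrable (fun x => e x * h₀ (w x)) μ →
      (∫ x, e x * h₀ (u x) ∂μ) + ∫ x, e x * ⟪φ x, w x - u x⟫_ℝ ∂μ ≤ ∫ x, e x * h₀ (w x) ∂μ) ↔
    ∀ᵐ x ∂μ, ∀ z, h₀ (u x) + ⟪φ x, z - u x⟫_ℝ ≤ h₀ z :=
  ⟨fun H => ae_forall_subgradient_of_forall_ae hφ
      (ae_subgradient_of_forall_integral_le he he_int hKu hpatch hpair H),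
    fun hsub w hw hKw => integral_add_integral_inner_le_of_ae_subgradient (fun x => (he x).le)
      hKu hKw (hpair w hw) (hsub.mono fun x hx => hx (w x))⟩

end Subgradient

theorem integrable_inner_of_memLp {α E : Type*} [MeasurableSpace α] {μ : Measure α}
    [NormedAddCommGroup E] [InnerProductSpace ℝ E] {p q : ENNReal} [ENNReal.HolderTriple p q 1]
    {f g : α → E} (hf : MemLp f p μ) (hg : MemLp g q μ) :
    Integrable (fun x => ⟪f x, g x⟫_ℝ) μ :=
  memLp_one_iff_integrable.1 <| MemLp.of_bilin (fun a b => ⟪a, b⟫_ℝ) 1 hf hg (hf.1.inner hg.1)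
    (ae_of_all _ fun x => by simpa using nnnorm_inner_le_nnnorm (f x) (g x))

theorem integrable_exp_mul_inner {U : Type*} [NormedAddCommGroup U] [InnerProductSpace ℝ U]
    {μ : Measure ℝ} {lam p q : ℝ} (hpq : p.HolderConjugate q) {φ w : ℝ → U}
    (hφ : MemLp (fun τ => Real.exp (-lam * τ / q) • φ τ) (ENNReal.ofReal q) μ)
    (hw : MemLp (fun τ => Real.exp (-lam * τ / p) • w τ) (ENNReal.ofReal p) μ) :
    Integrable (fun τ => Real.exp (-lam * τ) * ⟪φ τ, w τ⟫_ℝ) μ := by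
  have := hpq.symm.ennrealOfReal
  refine (integrable_inner_of_memLp hφ hw).congr (ae_of_all _ fun τ => ?_)
  have hsplit : -lam * τ / p + -lam * τ / q = -lam * τ := by
    calc -lam * τ / p + -lam * τ / q = -lam * τ * (p⁻¹ + q⁻¹) := by ring
      _ = -lam * τ := by rw [hpq.inv_add_inv_eq_one, mul_one]
  simp only [real_inner_smul_left, real_inner_smul_right, ← mul_assoc, ← Real.exp_add, hsplit]

theorem Continuous.memLp_restrict_of_isCompact {X E : Type*} [TopologicalSpace X]
    [MeasurableSpace X] [OpensMeasurableSpace X] [T2Space X] [NormedAddCommGroup E]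
    [SecondCountableTopologyEither X E] {μ : Measure X} [IsFiniteMeasureOnCompacts μ]
    {g : X → E} (hg : Continuous g) {K : Set X} (hK : IsCompact K) (p : ENNReal) :
    MemLp g p (μ.restrict K) := by
  have : IsFiniteMeasure (μ.restrict K) := isFiniteMeasure_restrict.2 hK.measure_lt_top.ne
  obtain ⟨C, hC⟩ := hK.exists_bound_of_continuousOn hg.continuousOn
  exact MemLp.of_bound hg.aestronglyMeasurable C
    ((ae_restrict_iff' hK.measurableSet).2 (ae_of_all _ hC))

theorem subdifferential_integral_functional_general
    {U : Type*} [NormedAddCommGroup U] [InnerProductSpace ℝ U]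
    (t T lam p q : ℝ)
    (hp : 2 ≤ p) (hpq : 1 / p + 1 / q = 1)
    (h₀ : U → ℝ)
    (u : ℝ → U)
    (hu : MemLp (fun τ => Real.exp (-lam * τ / p) • u τ)
      (ENNReal.ofReal p) (volume.restrict (Set.Ico t T)))
    (hKu : IntegrableOn (fun τ => Real.exp (-lam * τ) * h₀ (u τ)) (Set.Ico t T))
    (φ : ℝ → U)
    (hφ : MemLp (fun τ => Real.exp (-lam * τ / q) • φ τ)
      (ENNReal.ofReal q) (volume.restrict (Set.Ico t T))) :
    -- `φ ∈ ∂K(u)` ...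
    ((∀ w : ℝ → U,
        MemLp (fun τ => Real.exp (-lam * τ / p) • w τ)
          (ENNReal.ofReal p) (volume.restrict (Set.Ico t T)) →
        IntegrableOn (fun τ => Real.exp (-lam * τ) * h₀ (w τ)) (Set.Ico t T) →
        (∫ τ in Set.Ico t T, Real.exp (-lam * τ) * h₀ (u τ))
          + ∫ τ in Set.Ico t T, Real.exp (-lam * τ) * ⟪φ τ, w τ - u τ⟫_ℝ
          ≤ ∫ τ in Set.Ico t T, Real.exp (-lam * τ) * h₀ (w τ))
    -- ... iff `φ(τ) ∈ ∂h₀(u(τ))` for a.e. `τ ∈ [t,T)`.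
     ↔ (∀ᵐ τ ∂(volume.restrict (Set.Ico t T)),
          ∀ z : U, h₀ (u τ) + ⟪φ τ, z - u τ⟫_ℝ ≤ h₀ z)) := by
  classical
  have hpq' : p.HolderConjugate q :=
    Real.holderConjugate_iff.2 ⟨by linarith, by simpa only [one_div] using hpq⟩
  refine forall_integral_le_iff_ae_subgradient (Adm := {w | MemLp
      (fun τ => Real.exp (-lam * τ / p) • w τ) (ENNReal.ofReal p) (volume.restrict (Set.Ico t T))})
    (fun τ => Real.exp_pos (-lam * τ)) ?_ ?_ hKu ?_ ?_
  · exact (Continuous.integrableOn_Icc (by fun_prop)).mono_set Set.Ico_subset_Icc_self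
  · refine ((by fun_prop : Continuous fun τ => Real.exp (lam * τ / q)).aestronglyMeasurable.smul
      hφ.1).congr (ae_of_all _ fun τ => ?_)
    change Real.exp (lam * τ / q) • Real.exp (-lam * τ / q) • φ τ = φ τ
    rw [smul_smul, ← Real.exp_add, show lam * τ / q + -lam * τ / q = 0 by ring, Real.exp_zero,
      one_smul]
  · intro z A hA
    have hz : MemLp (fun τ => Real.exp (-lam * τ / p) • z) (ENNReal.ofReal p)
        (volume.restrict (Set.Ico t T)) :=
      (Continuous.memLp_restrict_of_isCompact (by fun_prop) isCompact_Icc _).mono_measure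
        (Measure.restrict_mono Set.Ico_subset_Icc_self le_rfl)
    have hw := MemLp.piecewise hA (hz.restrict A) (hu.restrict Aᶜ)
    rwa [Set.piecewise_op (h := fun τ (v : U) => Real.exp (-lam * τ / p) • v)] at hw
  · exact fun w hw => integrable_exp_mul_inner hpq' hφ
      (by simpa only [Pi.sub_def, smul_sub] using hw.sub hu)

/-- The subdifferential of `K(u) = ∫_t^T e^{-λτ} h₀(u(τ)) dτ` on `L^p_λ(t,T;U)`
at `u ∈ dom K`, with respect to the weighted duality pairing
`⟨φ,w⟩ = ∫_t^T e^{-λτ}(φ(τ)|w(τ))_U dτ`, equals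
`{φ ∈ L^q_λ(t,T;U) : φ(τ) ∈ ∂h₀(u(τ)) a.e. on [t,T)}`. -/
theorem subdifferential_integral_functional
    {U : Type*} [NormedAddCommGroup U] [InnerProductSpace ℝ U] [CompleteSpace U]
    (t T lam p q : ℝ) (ht : 0 ≤ t) (hT : t < T) (hlam : 0 < lam)
    (hp : 2 ≤ p) (hpq : 1 / p + 1 / q = 1)
    (h₀ : U → ℝ) (hconv : ConvexOn ℝ Set.univ h₀) (hlsc : LowerSemicontinuous h₀)
    (u : ℝ → U)
    (hu : MemLp (fun τ => Real.exp (-lam * τ / p) • u τ)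
      (ENNReal.ofReal p) (volume.restrict (Set.Ico t T)))
    (hKu : IntegrableOn (fun τ => Real.exp (-lam * τ) * h₀ (u τ)) (Set.Ico t T))
    (φ : ℝ → U)
    (hφ : MemLp (fun τ => Real.exp (-lam * τ / q) • φ τ)
      (ENNReal.ofReal q) (volume.restrict (Set.Ico t T))) :
    -- `φ ∈ ∂K(u)` ...
    ((∀ w : ℝ → U,
        MemLp (fun τ => Real.exp (-lam * τ / p) • w τ)
          (ENNReal.ofReal p) (volume.restrict (Set.Ico t T)) →
        IntegrableOn (fun τ => Real.exp (-lam * τ) * h₀ (w τ)) (Set.Ico t T) →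
        (∫ τ in Set.Ico t T, Real.exp (-lam * τ) * h₀ (u τ))
          + ∫ τ in Set.Ico t T, Real.exp (-lam * τ) * ⟪φ τ, w τ - u τ⟫_ℝ
          ≤ ∫ τ in Set.Ico t T, Real.exp (-lam * τ) * h₀ (w τ))
    -- ... iff `φ(τ) ∈ ∂h₀(u(τ))` for a.e. `τ ∈ [t,T)`.
     ↔ (∀ᵐ τ ∂(volume.restrict (Set.Ico t T)),
          ∀ z : U, h₀ (u τ) + ⟪φ τ, z - u τ⟫_ℝ ≤ h₀ z)) :=
  subdifferential_integral_functional_general t T lam p q hp hpq h₀ u hu hKu φ hφ
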